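/- WAM counting lemma: for a WAM state s = (t̄ | π | D | E) reached by an execution ρ, (1) the number of →c2 transitions in ρ equals the number of exponential transitions plus the size of the dump: |ρ|_c2 = |ρ|_e + |D|; (2) |E| + |D| ≤ |ρ|_m; and therefore (3) |ρ|_c2 ≤ |ρ|_e + |ρ|_m = |ρ|_p. -/

import Mathlib

/-- Pure λ-terms (codes of the machine). -/
inductive PTerm : Type
  | var : ℕ → PTerm
  | lam : ℕ → PTerm → PTerm
  | app : PTerm → PTerm → PTerm
deriving DecidableEq

def PTerm.fv : PTerm → Finset ℕ
  | .var x => {x}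
  | .lam x t => t.fv.erase x
  | .app t u => t.fv ∪ u.fv

def PTerm.size : PTerm → ℕ
  | .var _ => 1
  | .lam _ t => t.size + 1
  | .app t u => t.size + u.size + 1
def PTerm.rename (x y : ℕ) : PTerm → PTerm
  | .var z => if z = x then .var y else .var z
  | .lam z t => if z = x then .lam z t else .lam z (t.rename x y)
  | .app t u => .app (t.rename x y) (u.rename x y)

/-- α-equivalence on pure terms. -/
inductive PAlpha : PTerm → PTerm → Prop
  | var (x : ℕ) : PAlpha (.var x) (.var x)
  | app : PAlpha t t' → PAlpha u u' → PAlpha (.app t u) (.app t' u')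
  | lam (x y : ℕ) (t t' : PTerm) :
      (y = x ∨ y ∉ t.fv) → PAlpha (t.rename x y) t' → PAlpha (.lam x t) (.lam y t')

/-- WAM global environments: lists of substitutions `[x←t̄]`. -/
abbrev WEnv := List (ℕ × PTerm)

/-- WAM dump entries `(E, x, π)`. -/
abbrev WDump := List (WEnv × ℕ × List PTerm)

/-- WAM states `(t̄ | π | D | E)`. -/
structure WState : Type where
  code : PTerm
  stack : List PTerm
  dump : WDump
  env : WEnv

/-- The WAM transitions, given as an execution relation counting the numbers
    of `→c1`, `→c2`, multiplicative and exponential transitions. -/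
inductive WExec : ℕ → ℕ → ℕ → ℕ → WState → WState → Prop
  | refl (s : WState) : WExec 0 0 0 0 s s
  | c1step {c₁ c₂ m e : ℕ} {s'' : WState} (t u : PTerm) (π : List PTerm)
      (D : WDump) (E : WEnv) :
      WExec c₁ c₂ m e ⟨t, u :: π, D, E⟩ s'' →
      WExec (c₁ + 1) c₂ m e ⟨.app t u, π, D, E⟩ s''
  | c2step {c₁ c₂ m e : ℕ} {s'' : WState} (x : ℕ) (t : PTerm) (π : List PTerm)
      (D : WDump) (E₁ E₂ : WEnv) :
      (∀ p ∈ E₁, p.1 ≠ x) →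
      WExec c₁ c₂ m e ⟨t, [], (E₁, x, π) :: D, E₂⟩ s'' →
      WExec c₁ (c₂ + 1) m e ⟨.var x, π, D, E₁ ++ (x, t) :: E₂⟩ s''
  | mstep {c₁ c₂ m e : ℕ} {s'' : WState} (x : ℕ) (t u : PTerm) (π : List PTerm)
      (D : WDump) (E : WEnv) :
      WExec c₁ c₂ m e ⟨t, π, D, (x, u) :: E⟩ s'' →
      WExec c₁ c₂ (m + 1) e ⟨.lam x t, u :: π, D, E⟩ s''
  | estep {c₁ c₂ m e : ℕ} {s'' : WState} (y : ℕ) (b : PTerm) (v' : PTerm)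
      (x : ℕ) (π : List PTerm) (D : WDump) (E₁ E : WEnv) :
      PAlpha (.lam y b) v' →
      WExec c₁ c₂ m e ⟨v', π, D, E₁ ++ (x, .lam y b) :: E⟩ s'' →
      WExec c₁ c₂ m (e + 1) ⟨.lam y b, [], (E₁, x, π) :: D, E⟩ s''

/-- Substitutions of a state, where a dump entry `(E, x, π)` counts for `|E| + 1`: its pending
substitution `[x←·]` is created when the entry is pushed. -/
def WState.numSubst (s : WState) : ℕ :=
  s.env.length + (s.dump.map fun d => d.1.length + 1).sum

theorem WDump.length_le_sum (D : WDump) : D.length ≤ (D.map fun d => d.1.length + 1).sum := by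
  rw [← List.length_map (fun d : WEnv × ℕ × List PTerm => d.1.length + 1)]
  exact List.length_le_sum_of_one_le _ (by simp only [List.mem_map]; rintro _ ⟨d, -, rfl⟩; omega)

namespace WExec

variable {c₁ c₂ m e : ℕ} {s s' : WState}

theorem dump_length_add (h : WExec c₁ c₂ m e s s') :
    s'.dump.length + e = s.dump.length + c₂ := by
  induction h with
  | refl => rfl
  | c1step | mstep => assumption
  | c2step _ _ _ _ _ _ _ _ ih | estep _ _ _ _ _ _ _ _ _ _ ih =>
    simp only [List.length_cons] at ih ⊢; omega

theorem numSubst_eq (h : WExec c₁ c₂ m e s s') : s'.numSubst = s.numSubst + m := by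
  induction h with
  | refl => rfl
  | c1step _ _ _ _ _ _ ih => exact ih
  | mstep _ _ _ _ _ _ _ ih =>
    simp only [WState.numSubst, List.length_cons] at ih ⊢; omega
  | c2step _ _ _ _ _ _ _ _ ih | estep _ _ _ _ _ _ _ _ _ _ ih =>
    simp only [WState.numSubst, List.map_cons, List.sum_cons, List.length_append,
      List.length_cons] at ih ⊢
    omega

end WExec

theorem wam_counting_lemma_general (t₀ : PTerm) (c₁ c₂ m e : ℕ) (s : WState)
    (hexec : WExec c₁ c₂ m e ⟨t₀, [], [], []⟩ s) :
    c₂ = e + s.dump.length ∧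
    s.env.length + s.dump.length ≤ m ∧
    c₂ ≤ e + m := by
  have hdump := hexec.dump_length_add
  have hsubst := hexec.numSubst_eq
  have hdump_le := WDump.length_le_sum s.dump
  simp only [WState.numSubst, List.length_nil, List.map_nil, List.sum_nil] at hdump hsubst
  omega

/-- WAM counting lemma: for an execution `ρ` of initial (closed) code `t̄`
    reaching `s = (t̄' | π | D | E)`:
    (1) `|ρ|_c2 = |ρ|_e + |D|`; (2) `|E| + |D| ≤ |ρ|_m`;
    (3) `|ρ|_c2 ≤ |ρ|_e + |ρ|_m = |ρ|_p`. -/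
theorem wam_counting_lemma (t₀ : PTerm) (c₁ c₂ m e : ℕ) (s : WState)
    (hclosed : t₀.fv = ∅)
    (hexec : WExec c₁ c₂ m e ⟨t₀, [], [], []⟩ s) :
    c₂ = e + s.dump.length ∧
    s.env.length + s.dump.length ≤ m ∧
    c₂ ≤ e + m :=
  wam_counting_lemma_general t₀ c₁ c₂ m e s hexec
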